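/- Let d ≠ 0, f, ζ ∈ ℝ and let a ∈ C²([0,2π], ℝ²) be a 2π-periodic solution of the stationary Lugiato-Lefever system. Then the derivative satisfies |d| ‖a'‖_{L²} ≤ 6π f² ‖a‖_{L²}, and in particular |d| ‖a'‖_{L²} ≤ 6√2 π^{3/2} |f|³. -/

import Mathlib

/-!
Along a solution, `W = d (a₂ a₁' - a₁ a₂')` satisfies `W' = |a|² - f a₁ ≥ -f²/4`. As `W` is
`2π`-periodic, `F = W - W 0` vanishes at `0` and `2π`, so this slope bound gives `|F| ≤ π f² / 2`
on `[0, 2π]`. Integrating `W'` over a period gives `‖a‖² = f ∫ a₁ ≤ |f| √(2π) ‖a‖`, hence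
`‖a‖ ≤ √(2π) |f|`. Combining the energy identity with both equations, the periodic function
`Φ = d (a·a' - f a₁') + (|a|² - ζ) F` has `Φ' = d |a'|² + 2 (a·a') F`, so
`d ‖a'‖² = -2 ∫ (a·a') F` and Cauchy–Schwarz yields `|d| ‖a'‖ ≤ π f² ‖a‖`.
-/

open Real MeasureTheory Function

theorem sq_integral_mul_le {α : Type*} [MeasurableSpace α] {μ : Measure α} {u v : α → ℝ}
    (hu : Integrable (fun x => u x ^ 2) μ) (hv : Integrable (fun x => v x ^ 2) μ)
    (huv : Integrable (fun x => u x * v x) μ) :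
    (∫ x, u x * v x ∂μ) ^ 2 ≤ (∫ x, u x ^ 2 ∂μ) * ∫ x, v x ^ 2 ∂μ := by
  have hquad : ∀ t : ℝ, 0 ≤ (∫ x, v x ^ 2 ∂μ) * (t * t) + 2 * (∫ x, u x * v x ∂μ) * t
      + ∫ x, u x ^ 2 ∂μ := fun t =>
    calc 0 ≤ ∫ x, (u x + t * v x) ^ 2 ∂μ := integral_nonneg fun x => sq_nonneg _
      _ = ∫ x, (u x ^ 2 + 2 * t * (u x * v x) + t ^ 2 * v x ^ 2) ∂μ := by
          congr with x; ring
      _ = _ := by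
          have hlin : Integrable (fun x => u x ^ 2 + 2 * t * (u x * v x)) μ :=
            hu.add (huv.const_mul _)
          rw [integral_add hlin (hv.const_mul _), integral_add hu (huv.const_mul _),
            MeasureTheory.integral_const_mul, MeasureTheory.integral_const_mul]
          ring
  have := discrim_le_zero hquad
  rw [discrim] at this
  linarith

theorem sq_intervalIntegral_mul_le {u v : ℝ → ℝ} {a b : ℝ} (hab : a ≤ b) (hu : Continuous u)
    (hv : Continuous v) :
    (∫ x in a..b, u x * v x) ^ 2 ≤ (∫ x in a..b, u x ^ 2) * ∫ x in a..b, v x ^ 2 := by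
  simp only [intervalIntegral.integral_of_le hab]
  exact sq_integral_mul_le (hu.pow 2).integrableOn_Ioc (hv.pow 2).integrableOn_Ioc
    (hu.mul hv).integrableOn_Ioc

theorem sq_intervalIntegral_abs_mul_add_mul_le {u₁ u₂ v₁ v₂ : ℝ → ℝ} {a b : ℝ} (hab : a ≤ b)
    (hu₁ : Continuous u₁) (hu₂ : Continuous u₂) (hv₁ : Continuous v₁) (hv₂ : Continuous v₂) :
    (∫ x in a..b, |u₁ x * v₁ x + u₂ x * v₂ x|) ^ 2
      ≤ (∫ x in a..b, (u₁ x ^ 2 + u₂ x ^ 2)) * ∫ x in a..b, (v₁ x ^ 2 + v₂ x ^ 2) := by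
  set u := fun x => √(u₁ x ^ 2 + u₂ x ^ 2)
  set v := fun x => √(v₁ x ^ 2 + v₂ x ^ 2)
  have hu : Continuous u := by fun_prop
  have hv : Continuous v := by fun_prop
  have hpointwise : ∀ x, |u₁ x * v₁ x + u₂ x * v₂ x| ≤ u x * v x := fun x => by
    rw [← sqrt_mul (by positivity)]
    exact abs_le_sqrt (by nlinarith [sq_nonneg (u₁ x * v₂ x - u₂ x * v₁ x)])
  have hmono : ∫ x in a..b, |u₁ x * v₁ x + u₂ x * v₂ x| ≤ ∫ x in a..b, u x * v x :=
    intervalIntegral.integral_mono_on hab ((by fun_prop : Continuous _).intervalIntegrable _ _)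
      ((hu.mul hv).intervalIntegrable _ _) fun x _ => hpointwise x
  have hu_sq : ∀ x, u x ^ 2 = u₁ x ^ 2 + u₂ x ^ 2 := fun x => sq_sqrt (by positivity)
  have hv_sq : ∀ x, v x ^ 2 = v₁ x ^ 2 + v₂ x ^ 2 := fun x => sq_sqrt (by positivity)
  calc (∫ x in a..b, |u₁ x * v₁ x + u₂ x * v₂ x|) ^ 2 ≤ (∫ x in a..b, u x * v x) ^ 2 :=
        pow_le_pow_left₀ (intervalIntegral.integral_nonneg hab fun x _ => abs_nonneg _)
          hmono 2
    _ ≤ (∫ x in a..b, u x ^ 2) * ∫ x in a..b, v x ^ 2 := sq_intervalIntegral_mul_le hab hu hv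
    _ = _ := by simp only [hu_sq, hv_sq]

theorem Function.Periodic.deriv {u : ℝ → ℝ} {T : ℝ} (hu : Periodic u T) :
    Periodic (deriv u) T := fun x => by
  rw [← deriv_comp_add_const, show (fun y => u (y + T)) = u from funext hu]

theorem integral_eq_zero_of_hasDerivAt_of_periodic {u u' : ℝ → ℝ} {T : ℝ}
    (hderiv : ∀ x, HasDerivAt u (u' x) x) (hint : IntervalIntegrable u' volume 0 T)
    (hu : Periodic u T) : ∫ x in 0..T, u' x = 0 := by
  rw [intervalIntegral.integral_eq_sub_of_hasDerivAt (fun x _ => hderiv x) hint, sub_eq_zero]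
  simpa using hu 0

theorem neg_mul_le_and_le_mul_of_hasDerivAt {F F' : ℝ → ℝ} {m a b x : ℝ}
    (hF : ∀ y, HasDerivAt F (F' y) y) (hm : ∀ y, -m ≤ F' y) (ha : F a = 0) (hb : F b = 0)
    (hx : x ∈ Set.Icc a b) : -(m * (x - a)) ≤ F x ∧ F x ≤ m * (b - x) := by
  have hmono : Monotone fun y => F y + m * y :=
    monotone_of_hasDerivAt_nonneg (fun y => (hF y).add ((hasDerivAt_id y).const_mul m))
      fun y => by simpa using neg_le_iff_add_nonneg.mp (hm y)
  have hxa := hmono hx.1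
  have hbx := hmono hx.2
  simp only [ha, hb] at hxa hbx
  constructor <;> linarith

theorem ContDiff.hasDerivAt_deriv_of_two {u : ℝ → ℝ} (hu : ContDiff ℝ 2 u) (x : ℝ) :
    HasDerivAt (deriv u) (deriv (deriv u) x) x :=
  ((contDiff_succ_iff_deriv (n := 1)).mp hu).2.2.differentiable one_ne_zero x |>.hasDerivAt

noncomputable def scaledWronskian (d : ℝ) (a1 a2 : ℝ → ℝ) (x : ℝ) : ℝ :=
  d * (a2 x * deriv a1 x - a1 x * deriv a2 x)

structure IsStationaryLLESolution (d ζ f : ℝ) (a1 a2 : ℝ → ℝ) : Prop where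
  contDiff₁ : ContDiff ℝ 2 a1
  contDiff₂ : ContDiff ℝ 2 a2
  periodic₁ : Periodic a1 (2 * π)
  periodic₂ : Periodic a2 (2 * π)
  eq₁ : ∀ x, -d * deriv (deriv a1) x = -(a2 x) - ζ * a1 x + (a1 x ^ 2 + a2 x ^ 2) * a1 x
  eq₂ : ∀ x, -d * deriv (deriv a2) x = a1 x - ζ * a2 x + (a1 x ^ 2 + a2 x ^ 2) * a2 x - f

namespace IsStationaryLLESolution

variable {d ζ f : ℝ} {a1 a2 : ℝ → ℝ}

theorem hasDerivAt_scaledWronskian (h : IsStationaryLLESolution d ζ f a1 a2) (x : ℝ) :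
    HasDerivAt (scaledWronskian d a1 a2) (a1 x ^ 2 + a2 x ^ 2 - f * a1 x) x := by
  have hW := (((h.contDiff₂.differentiable two_ne_zero x).hasDerivAt.mul
      (h.contDiff₁.hasDerivAt_deriv_of_two x)).sub
    ((h.contDiff₁.differentiable two_ne_zero x).hasDerivAt.mul
      (h.contDiff₂.hasDerivAt_deriv_of_two x))).const_mul d
  refine hW.congr_deriv ?_
  linear_combination -a2 x * h.eq₁ x + a1 x * h.eq₂ x

theorem hasDerivAt_energyFlux (h : IsStationaryLLESolution d ζ f a1 a2) (c x : ℝ) :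
    HasDerivAt (fun y => d * (a1 y * deriv a1 y + a2 y * deriv a2 y - f * deriv a1 y)
        + (a1 y ^ 2 + a2 y ^ 2 - ζ) * (scaledWronskian d a1 a2 y - c))
      (d * (deriv a1 x ^ 2 + deriv a2 x ^ 2)
        + 2 * ((a1 x * deriv a1 x + a2 x * deriv a2 x) * (scaledWronskian d a1 a2 x - c)))
      x := by
  have ha1 := (h.contDiff₁.differentiable two_ne_zero x).hasDerivAt
  have ha2 := (h.contDiff₂.differentiable two_ne_zero x).hasDerivAt
  have hb1 := h.contDiff₁.hasDerivAt_deriv_of_two x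
  have hb2 := h.contDiff₂.hasDerivAt_deriv_of_two x
  have hΦ := (((ha1.mul hb1).add (ha2.mul hb2)).sub (hb1.const_mul f)).const_mul d |>.add
    ((((ha1.pow 2).add (ha2.pow 2)).sub_const ζ).mul
      ((h.hasDerivAt_scaledWronskian x).sub_const c))
  refine hΦ.congr_deriv ?_
  simp only [Pi.add_apply, Pi.pow_apply]
  -- by the equations, `d (a·a'' - f a₁'') = -(|a|² - ζ) (|a|² - f a₁) = -(|a|² - ζ) W'`
  linear_combination (-a1 x + f) * h.eq₁ x - a2 x * h.eq₂ x

theorem periodic_scaledWronskian (h : IsStationaryLLESolution d ζ f a1 a2) :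
    Periodic (scaledWronskian d a1 a2) (2 * π) := fun x => by
  simp only [scaledWronskian, h.periodic₁ x, h.periodic₂ x, h.periodic₁.deriv x,
    h.periodic₂.deriv x]

theorem continuous_scaledWronskian (h : IsStationaryLLESolution d ζ f a1 a2) :
    Continuous (scaledWronskian d a1 a2) :=
  continuous_iff_continuousAt.2 fun x => (h.hasDerivAt_scaledWronskian x).continuousAt

theorem integral_sq_add_sq_eq (h : IsStationaryLLESolution d ζ f a1 a2) :
    ∫ x in 0..2 * π, (a1 x ^ 2 + a2 x ^ 2) = f * ∫ x in 0..2 * π, a1 x := by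
  have ca1 := h.contDiff₁.continuous
  have ca2 := h.contDiff₂.continuous
  have hzero := integral_eq_zero_of_hasDerivAt_of_periodic h.hasDerivAt_scaledWronskian
    ((by fun_prop : Continuous fun x => a1 x ^ 2 + a2 x ^ 2 - f * a1 x).intervalIntegrable _ _)
    h.periodic_scaledWronskian
  rw [intervalIntegral.integral_sub ((by fun_prop : Continuous _).intervalIntegrable _ _)
    ((by fun_prop : Continuous _).intervalIntegrable _ _),
    intervalIntegral.integral_const_mul] at hzero
  linarith

theorem integral_sq_add_sq_le (h : IsStationaryLLESolution d ζ f a1 a2) :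
    ∫ x in 0..2 * π, (a1 x ^ 2 + a2 x ^ 2) ≤ 2 * π * f ^ 2 := by
  set S := ∫ x in 0..2 * π, (a1 x ^ 2 + a2 x ^ 2) with hS_def
  have ca1 := h.contDiff₁.continuous
  have ca2 := h.contDiff₂.continuous
  have h2π : 0 ≤ 2 * π := by positivity
  have hS : 0 ≤ S := intervalIntegral.integral_nonneg h2π fun x _ => by positivity
  have hmean : (∫ x in 0..2 * π, a1 x) ^ 2 ≤ S * (2 * π) :=
    calc (∫ x in 0..2 * π, a1 x) ^ 2 = (∫ x in 0..2 * π, a1 x * 1) ^ 2 := by simp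
      _ ≤ (∫ x in 0..2 * π, a1 x ^ 2) * ∫ x in 0..2 * π, (1 : ℝ) ^ 2 :=
        sq_intervalIntegral_mul_le h2π ca1 continuous_const
      _ ≤ S * (2 * π) := by
        rw [one_pow, intervalIntegral.integral_const, smul_eq_mul, mul_one, sub_zero]
        gcongr
        exact intervalIntegral.integral_mono_on h2π ((ca1.pow 2).intervalIntegrable _ _)
          ((by fun_prop : Continuous _).intervalIntegrable _ _)
          fun x _ => le_add_of_nonneg_right (sq_nonneg _)
  have hS_sq : S ^ 2 ≤ 2 * π * f ^ 2 * S := by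
    calc S ^ 2 = f ^ 2 * (∫ x in 0..2 * π, a1 x) ^ 2 := by
          rw [hS_def, h.integral_sq_add_sq_eq]; ring
      _ ≤ f ^ 2 * (S * (2 * π)) := by gcongr
      _ = 2 * π * f ^ 2 * S := by ring
  nlinarith [mul_nonneg h2π (sq_nonneg f)]

theorem mul_integral_deriv_sq_add_sq_eq (h : IsStationaryLLESolution d ζ f a1 a2) :
    d * ∫ x in 0..2 * π, (deriv a1 x ^ 2 + deriv a2 x ^ 2)
      = -(2 * ∫ x in 0..2 * π, (a1 x * deriv a1 x + a2 x * deriv a2 x)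
          * (scaledWronskian d a1 a2 x - scaledWronskian d a1 a2 0)) := by
  have ca1 := h.contDiff₁.continuous
  have ca2 := h.contDiff₂.continuous
  have cb1 := h.contDiff₁.continuous_deriv one_le_two
  have cb2 := h.contDiff₂.continuous_deriv one_le_two
  have cW := h.continuous_scaledWronskian
  have hzero := integral_eq_zero_of_hasDerivAt_of_periodic (T := 2 * π)
    (h.hasDerivAt_energyFlux (scaledWronskian d a1 a2 0))
    ((by fun_prop : Continuous _).intervalIntegrable _ _)
    (by
      intro x
      simp only [h.periodic₁ x, h.periodic₂ x, h.periodic₁.deriv x, h.periodic₂.deriv x,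
        h.periodic_scaledWronskian x])
  rw [intervalIntegral.integral_add ((by fun_prop : Continuous _).intervalIntegrable _ _)
    ((by fun_prop : Continuous _).intervalIntegrable _ _), intervalIntegral.integral_const_mul,
    intervalIntegral.integral_const_mul] at hzero
  linarith

theorem abs_scaledWronskian_sub_le (h : IsStationaryLLESolution d ζ f a1 a2) {x : ℝ}
    (hx : x ∈ Set.Icc 0 (2 * π)) :
    |scaledWronskian d a1 a2 x - scaledWronskian d a1 a2 0| ≤ π * f ^ 2 / 2 := by
  obtain ⟨hlow, hup⟩ := neg_mul_le_and_le_mul_of_hasDerivAt (m := f ^ 2 / 4)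
    (fun y => (h.hasDerivAt_scaledWronskian y).sub_const (scaledWronskian d a1 a2 0))
    (fun y => by nlinarith [sq_nonneg (a1 y - f / 2), sq_nonneg (a2 y)]) (sub_self _)
    (by simpa [sub_eq_zero] using h.periodic_scaledWronskian 0) hx
  rw [abs_le]
  constructor <;> nlinarith [hx.1, hx.2, sq_nonneg f]

theorem abs_mul_integral_deriv_sq_add_sq_le (h : IsStationaryLLESolution d ζ f a1 a2) :
    |d| * ∫ x in 0..2 * π, (deriv a1 x ^ 2 + deriv a2 x ^ 2)
      ≤ π * f ^ 2 * ∫ x in 0..2 * π, |a1 x * deriv a1 x + a2 x * deriv a2 x| := by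
  have ca1 := h.contDiff₁.continuous
  have ca2 := h.contDiff₂.continuous
  have cb1 := h.contDiff₁.continuous_deriv one_le_two
  have cb2 := h.contDiff₂.continuous_deriv one_le_two
  have cW := h.continuous_scaledWronskian
  have h2π : 0 ≤ 2 * π := by positivity
  rw [← abs_of_nonneg (intervalIntegral.integral_nonneg h2π fun x _ => by positivity),
    ← abs_mul, h.mul_integral_deriv_sq_add_sq_eq, abs_neg, abs_mul, abs_two]
  calc 2 * |∫ x in 0..2 * π, (a1 x * deriv a1 x + a2 x * deriv a2 x)
          * (scaledWronskian d a1 a2 x - scaledWronskian d a1 a2 0)|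
      ≤ 2 * ∫ x in 0..2 * π, |a1 x * deriv a1 x + a2 x * deriv a2 x| * (π * f ^ 2 / 2) := by
        gcongr
        refine (intervalIntegral.abs_integral_le_integral_abs h2π).trans
          (intervalIntegral.integral_mono_on h2π
            ((by fun_prop : Continuous _).intervalIntegrable _ _)
            ((by fun_prop : Continuous _).intervalIntegrable _ _) fun x hx => ?_)
        rw [abs_mul]
        exact mul_le_mul_of_nonneg_left (h.abs_scaledWronskian_sub_le hx) (abs_nonneg _)
    _ = π * f ^ 2 * ∫ x in 0..2 * π, |a1 x * deriv a1 x + a2 x * deriv a2 x| := by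
        rw [intervalIntegral.integral_mul_const]
        ring

theorem abs_mul_sqrt_integral_deriv_sq_add_sq_le (h : IsStationaryLLESolution d ζ f a1 a2) :
    |d| * √(∫ x in 0..2 * π, (deriv a1 x ^ 2 + deriv a2 x ^ 2))
      ≤ π * f ^ 2 * √(∫ x in 0..2 * π, (a1 x ^ 2 + a2 x ^ 2)) := by
  set X := ∫ x in 0..2 * π, (deriv a1 x ^ 2 + deriv a2 x ^ 2)
  set S := ∫ x in 0..2 * π, (a1 x ^ 2 + a2 x ^ 2)
  set I := ∫ x in 0..2 * π, |a1 x * deriv a1 x + a2 x * deriv a2 x|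
  have h2π : 0 ≤ 2 * π := by positivity
  have hX : 0 ≤ X := intervalIntegral.integral_nonneg h2π fun x _ => by positivity
  have hS : 0 ≤ S := intervalIntegral.integral_nonneg h2π fun x _ => by positivity
  have hI : 0 ≤ I := intervalIntegral.integral_nonneg h2π fun x _ => abs_nonneg _
  have hbound : |d| * X ≤ π * f ^ 2 * I := h.abs_mul_integral_deriv_sq_add_sq_le
  have hCS : I ^ 2 ≤ S * X := sq_intervalIntegral_abs_mul_add_mul_le h2π
    h.contDiff₁.continuous h.contDiff₂.continuous (h.contDiff₁.continuous_deriv one_le_two)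
    (h.contDiff₂.continuous_deriv one_le_two)
  have hsq : |d| ^ 2 * X ≤ (π * f ^ 2) ^ 2 * S := by
    rcases hX.eq_or_lt with hX0 | hXpos
    · rw [← hX0, mul_zero]
      positivity
    · refine le_of_mul_le_mul_right ?_ hXpos
      calc |d| ^ 2 * X * X = (|d| * X) ^ 2 := by ring
        _ ≤ (π * f ^ 2 * I) ^ 2 := pow_le_pow_left₀ (by positivity) hbound 2
        _ = (π * f ^ 2) ^ 2 * I ^ 2 := by ring
        _ ≤ (π * f ^ 2) ^ 2 * (S * X) := by gcongr
        _ = (π * f ^ 2) ^ 2 * S * X := by ring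
  rw [← sqrt_sq (abs_nonneg d), ← sqrt_sq (by positivity : 0 ≤ π * f ^ 2), ← sqrt_mul' _ hX,
    ← sqrt_mul' _ hS]
  exact sqrt_le_sqrt hsq

end IsStationaryLLESolution

theorem stmt_2_general (d ζ f : ℝ) (a1 a2 : ℝ → ℝ)
    (ha1 : ContDiff ℝ 2 a1) (ha2 : ContDiff ℝ 2 a2)
    (hp1 : Function.Periodic a1 (2 * π)) (hp2 : Function.Periodic a2 (2 * π))
    (heq1 : ∀ x, -d * deriv (deriv a1) x
      = -(a2 x) - ζ * a1 x + (a1 x ^ 2 + a2 x ^ 2) * a1 x)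
    (heq2 : ∀ x, -d * deriv (deriv a2) x
      = a1 x - ζ * a2 x + (a1 x ^ 2 + a2 x ^ 2) * a2 x - f) :
    |d| * Real.sqrt (∫ x in (0:ℝ)..(2 * π), (deriv a1 x ^ 2 + deriv a2 x ^ 2))
      ≤ 6 * π * f ^ 2 * Real.sqrt (∫ x in (0:ℝ)..(2 * π), (a1 x ^ 2 + a2 x ^ 2)) ∧
    |d| * Real.sqrt (∫ x in (0:ℝ)..(2 * π), (deriv a1 x ^ 2 + deriv a2 x ^ 2))
      ≤ 6 * Real.sqrt 2 * π ^ ((3:ℝ)/2) * |f| ^ 3 := by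
  have h : IsStationaryLLESolution d ζ f a1 a2 := ⟨ha1, ha2, hp1, hp2, heq1, heq2⟩
  have hkey := h.abs_mul_sqrt_integral_deriv_sq_add_sq_le
  have hS : √(∫ x in 0..2 * π, (a1 x ^ 2 + a2 x ^ 2)) ≤ √2 * √π * |f| := by
    rw [← sqrt_mul zero_le_two, ← sqrt_sq_eq_abs, ← sqrt_mul (by positivity)]
    exact sqrt_le_sqrt (by simpa [mul_assoc] using h.integral_sq_add_sq_le)
  have hπ : π ^ ((3 : ℝ) / 2) = π * √π := by
    rw [sqrt_eq_rpow, ← rpow_one_add' pi_pos.le (by norm_num)]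
    norm_num
  refine ⟨hkey.trans (by gcongr; linarith [pi_pos]), ?_⟩
  calc _ ≤ π * f ^ 2 * √(∫ x in 0..2 * π, (a1 x ^ 2 + a2 x ^ 2)) := hkey
    _ ≤ π * f ^ 2 * (√2 * √π * |f|) := by gcongr
    _ = √2 * π ^ ((3 : ℝ) / 2) * |f| ^ 3 := by rw [hπ, ← sq_abs f]; ring
    _ ≤ 6 * √2 * π ^ ((3 : ℝ) / 2) * |f| ^ 3 := by gcongr; norm_num

theorem stmt_2 (d ζ f : ℝ) (hd : d ≠ 0) (a1 a2 : ℝ → ℝ)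
    (ha1 : ContDiff ℝ 2 a1) (ha2 : ContDiff ℝ 2 a2)
    (hp1 : Function.Periodic a1 (2 * π)) (hp2 : Function.Periodic a2 (2 * π))
    (heq1 : ∀ x, -d * deriv (deriv a1) x
      = -(a2 x) - ζ * a1 x + (a1 x ^ 2 + a2 x ^ 2) * a1 x)
    (heq2 : ∀ x, -d * deriv (deriv a2) x
      = a1 x - ζ * a2 x + (a1 x ^ 2 + a2 x ^ 2) * a2 x - f) :
    |d| * Real.sqrt (∫ x in (0:ℝ)..(2 * π), (deriv a1 x ^ 2 + deriv a2 x ^ 2))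
      ≤ 6 * π * f ^ 2 * Real.sqrt (∫ x in (0:ℝ)..(2 * π), (a1 x ^ 2 + a2 x ^ 2)) ∧
    |d| * Real.sqrt (∫ x in (0:ℝ)..(2 * π), (deriv a1 x ^ 2 + deriv a2 x ^ 2))
      ≤ 6 * Real.sqrt 2 * π ^ ((3:ℝ)/2) * |f| ^ 3 :=
  stmt_2_general d ζ f a1 a2 ha1 ha2 hp1 hp2 heq1 heq2
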